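/- The map T₃ : (ℂ \ {0})³ → (ℂ \ {0})³ defined by T₃(x,y,z) = (x², y·x⁻¹, x·z) satisfies the tetrahedron equation T¹²³ ∘ T¹⁴⁵ ∘ T²⁴⁶ ∘ T³⁵⁶ = T³⁵⁶ ∘ T²⁴⁶ ∘ T¹⁴⁵ ∘ T¹²³, i.e. it is a tetrahedron map. Moreover T₃ is noninvolutive: there exists (x,y,z) ∈ (ℂ \ {0})³ with (T₃ ∘ T₃)(x,y,z) ≠ (x,y,z); indeed (T₃ ∘ T₃)(x,y,z) = (x⁴, y·x⁻³, x³·z) for all x,y,z. -/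

import Mathlib

section Tetra

variable {X : Type*}

/-- `T` acting on factors 1,2,3 of `X⁶`. -/
def lift123 (T : X × X × X → X × X × X) :
    X × X × X × X × X × X → X × X × X × X × X × X
  | (a, b, c, d, e, f) =>
    match T (a, b, c) with
    | (a', b', c') => (a', b', c', d, e, f)

/-- `T` acting on factors 1,4,5 of `X⁶`. -/
def lift145 (T : X × X × X → X × X × X) :
    X × X × X × X × X × X → X × X × X × X × X × X
  | (a, b, c, d, e, f) =>
    match T (a, d, e) with
    | (a', d', e') => (a', b, c, d', e', f)

/-- `T` acting on factors 2,4,6 of `X⁶`. -/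
def lift246 (T : X × X × X → X × X × X) :
    X × X × X × X × X × X → X × X × X × X × X × X
  | (a, b, c, d, e, f) =>
    match T (b, d, f) with
    | (b', d', f') => (a, b', c, d', e, f')

/-- `T` acting on factors 3,5,6 of `X⁶`. -/
def lift356 (T : X × X × X → X × X × X) :
    X × X × X × X × X × X → X × X × X × X × X × X
  | (a, b, c, d, e, f) =>
    match T (c, e, f) with
    | (c', e', f') => (a, b, c', d, e', f')

/-- The Zamolodchikov tetrahedron equation for a map `T : X³ → X³`. -/
def IsTetrahedronMap (T : X × X × X → X × X × X) : Prop :=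
  lift123 T ∘ lift145 T ∘ lift246 T ∘ lift356 T =
    lift356 T ∘ lift246 T ∘ lift145 T ∘ lift123 T

end Tetra

/-- The map `T₃(x,y,z) = (x², y·x⁻¹, x·z)` on `(ℂ \ {0})³`. -/
def T3 : ℂˣ × ℂˣ × ℂˣ → ℂˣ × ℂˣ × ℂˣ :=
  fun (x, y, z) => (x ^ 2, y * x⁻¹, x * z)

/-!
In additive notation `T₃` is the `ℤ`-linear map `(a, b, c) ↦ (2a, b - a, c + a)`, and both sides of
the tetrahedron equation are `ℤ`-linear maps of `X⁶` with the same matrix, so `T₃` is a tetrahedron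
map on every abelian group. Its square multiplies the first coordinate by `4`, so it moves every
point whose first coordinate `x` has `3x ≠ 0`, e.g. `x = 2` in `ℂˣ`.
-/

section CommGroup

variable (G : Type*) [CommGroup G]

def T3On : G × G × G → G × G × G :=
  fun (x, y, z) => (x ^ 2, y * x⁻¹, x * z)

theorem isTetrahedronMap_T3On : IsTetrahedronMap (T3On G) := by
  funext ⟨a, b, c, d, e, f⟩
  simp only [Function.comp_apply, lift123, lift145, lift246, lift356, T3On, Prod.mk.injEq,
    ← Additive.ofMul.injective.eq_iff (a := _ * _), ofMul_mul, ofMul_inv, ofMul_pow]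
  exact ⟨trivial, by abel, by abel, by abel, by abel, by abel⟩

variable {G}

theorem T3On_comp_T3On_apply (x y z : G) :
    (T3On G ∘ T3On G) (x, y, z) = (x ^ 4, y * (x ^ 3)⁻¹, x ^ 3 * z) := by
  simp only [Function.comp_apply, T3On, ← pow_mul, mul_assoc, ← mul_inv, ← pow_succ',
    ← mul_assoc (x ^ 2), ← pow_succ]

theorem T3On_comp_T3On_apply_ne {x : G} (hx : x ^ 3 ≠ 1) (y z : G) :
    (T3On G ∘ T3On G) (x, y, z) ≠ (x, y, z) := by
  rw [T3On_comp_T3On_apply, Ne, Prod.mk.injEq, pow_succ]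
  exact fun h => hx (mul_eq_right.mp h.1)

end CommGroup

theorem T3_eq_T3On : T3 = T3On ℂˣ := rfl

theorem T3_isTetrahedronMap_noninvolutive :
    IsTetrahedronMap T3 ∧
    (∀ x y z : ℂˣ, (T3 ∘ T3) (x, y, z) = (x ^ 4, y * (x ^ 3)⁻¹, x ^ 3 * z)) ∧
    (∃ x y z : ℂˣ, (T3 ∘ T3) (x, y, z) ≠ (x, y, z)) := by
  rw [T3_eq_T3On]
  refine ⟨isTetrahedronMap_T3On ℂˣ, T3On_comp_T3On_apply, Units.mk0 2 two_ne_zero, 1, 1,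
    T3On_comp_T3On_apply_ne ?_ 1 1⟩
  rw [Ne, Units.ext_iff]
  norm_num
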